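/- For z ∈ ℚZ[[λ]], the identity Ψ_f(1/(1−λz)) = 1/(1 − f_◊(λz)) holds, where for f(t) = c₁t + c₂t² + ⋯, f_◊(λz) := ∑_{i≥1} λⁱ cᵢ z^{◊i} and Ψ_f acts on words of length n by Ψ_f(w) = ∑_{I ∈ 𝒞(n)} c_{i₁}⋯c_{i_l} I[w]. -/

import Mathlib

/- STATEMENT 17: Ψ_f(1/(1−λz)) = 1/(1 − f_◊(λz)) for z ∈ ℚZ[[λ]]. A series
z = ∑_{j≥0} λʲ z_j ∈ ℚZ[[λ]] is modelled by its coefficient function `z : ℕ → ℚZ`.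
Both sides are power series in λ with coefficients in ℚ⟨Z⟩ and are compared
coefficientwise: `geomC g n` is the λⁿ-coefficient of 1/(1 − G) for
G = ∑_{i≥1} λⁱ g(i), computed via compositions; the λⁿ-coefficient of 1/(1−λz) is
`geomC (fun i => emb (z (i−1))) n`, and f_◊(λz) = ∑_i cᵢ (λz)^{◊i} has
λⁱ-coefficient ∑_{I ∈ 𝒞(i)} c_{l(I)} z_{i₁−1} ◊ ⋯ ◊ z_{i_l−1}. -/

/-- Noncommutative polynomials ℚ⟨Z⟩ on the alphabet Z = {z_m}, letters indexed by ℕ,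
with the ◊ product z_m ◊ z_n = z_{m+n}. Words are lists of indices. -/
abbrev QW := List ℕ →₀ ℚ

/-- The list of all compositions of `n` (lists of positive integers summing to `n`). -/
def comps : ℕ → List (List ℕ)
  | 0 => [[]]
  | n + 1 => (List.range (n + 1)).attach.flatMap fun k =>
      (comps k.1).map fun I => (n + 1 - k.1) :: I
  decreasing_by exact List.mem_range.mp k.2

/-- The action of a composition `I` on a word `w` of length `I.sum`: contract the
consecutive groups of letters of sizes `i₁, …, i_l` via `z_m ◊ z_n = z_{m+n}`. -/
def act : List ℕ → List ℕ → List ℕ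
  | [], _ => []
  | i :: I, w => (w.take i).sum :: act I (w.drop i)

/-- Hoffman's map `Ψ_f` associated to the coefficient sequence `c` of `f`:
on a word `w` of length `n`, `Ψ_f(w) = ∑_{I ∈ 𝒞(n)} c_{i₁}⋯c_{i_l} I[w]`. -/
noncomputable def Psi (c : ℕ → ℚ) (p : QW) : QW :=
  p.sum fun w r => r •
    ((comps w.length).map fun I =>
      ((I.map c).prod : ℚ) • (Finsupp.single (act I w) (1 : ℚ) : QW)).sum

/-- Concatenation product on ℚ⟨Z⟩. -/
noncomputable def concP (p q : QW) : QW :=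
  p.sum fun u r => q.sum fun v s => Finsupp.single (u ++ v) (r * s)

/-- The embedding ℚZ → ℚ⟨Z⟩ sending each letter to the corresponding length-one word. -/
noncomputable def emb (z : ℕ →₀ ℚ) : QW :=
  z.sum fun a r => Finsupp.single [a] r

/-- The ◊ product on ℚZ, extending z_a ◊ z_b = z_{a+b} bilinearly. -/
noncomputable def dmul (z w : ℕ →₀ ℚ) : ℕ →₀ ℚ :=
  z.sum fun a r => w.sum fun b s => Finsupp.single (a + b) (r * s)

/-- The ◊ product of a nonempty list of elements of ℚZ (zero on the empty list). -/
noncomputable def dList : List (ℕ →₀ ℚ) → (ℕ →₀ ℚ)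
  | [] => 0
  | [a] => a
  | a :: t => dmul a (dList t)

/-- `geomC g n` is the λⁿ-coefficient of the geometric series 1/(1 − G) in ℚ⟨Z⟩[[λ]],
where G = ∑_{i≥1} λⁱ g(i): it is ∑ over compositions (i₁,…,i_l) of n of the
concatenation product g(i₁)⋯g(i_l). -/
noncomputable def geomC (g : ℕ → QW) (n : ℕ) : QW :=
  ((comps n).map fun I => (I.map g).foldr concP (Finsupp.single [] 1)).sum

/-!
Ψ_f can be computed by reading a word from the left while keeping track of the first block
of the composition: after a letter, that block either closes or absorbs the next letter via ◊.
With the open block recorded by its ◊-product `y` and its length `k`, this gives an operator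
`PsiShift c k y` with Ψ_f(y·p) = `PsiShift c 1 y p` and
`PsiShift c k y (y'·p) = c k • y·Ψ_f(y'·p) + PsiShift c (k+1) (y◊y') p`.
Feeding in 1/(1−λz) = 1 + λz·1/(1−λz) and inducting on the λ-degree shows that
`PsiShift c k y` sends 1/(1−λz) to (∑ⱼ c_{j+k} y ◊ (λz)^{◊j}) · 1/(1 − f_◊(λz));
for k = 1 and y = λz the first factor is f_◊(λz), which gives the theorem.
-/

open Finset

theorem sum_antidiagonal_antidiagonal {A M : Type*} [AddCommMonoid A] [HasAntidiagonal A]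
    [AddCommMonoid M] (n : A) (f : A → A → A → M) :
    ∑ p ∈ antidiagonal n, ∑ q ∈ antidiagonal p.2, f p.1 q.1 q.2 =
      ∑ p ∈ antidiagonal n, ∑ q ∈ antidiagonal p.1, f q.1 q.2 p.2 := by
  simp only [Finset.sum_sigma']
  apply Finset.sum_nbij' (fun x ↦ ⟨(x.1.1 + x.2.1, x.2.2), (x.1.1, x.2.1)⟩)
    (fun x ↦ ⟨(x.2.1, x.2.2 + x.1.2), (x.2.2, x.1.2)⟩) <;> aesop (add simp [add_assoc])

section BilinMapDomain
variable (R : Type*) {α β γ : Type*} [CommSemiring R]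

noncomputable def bilinMapDomain (f : α → β → γ) :
    (α →₀ R) →ₗ[R] (β →₀ R) →ₗ[R] (γ →₀ R) :=
  Finsupp.linearCombination R fun a => Finsupp.lmapDomain R R (f a)

variable {R}

lemma bilinMapDomain_apply (f : α → β → γ) (p : α →₀ R) (q : β →₀ R) :
    bilinMapDomain R f p q =
      p.sum fun a r => q.sum fun b s => Finsupp.single (f a b) (r * s) := by
  simp [bilinMapDomain, Finsupp.linearCombination_apply, Finsupp.mapDomain, Finsupp.smul_sum,
    LinearMap.finsupp_sum_apply]

lemma bilinMapDomain_single (f : α → β → γ) (a : α) (b : β) (r s : R) :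
    bilinMapDomain R f (Finsupp.single a r) (Finsupp.single b s) =
      Finsupp.single (f a b) (r * s) := by
  simp [bilinMapDomain_apply]

end BilinMapDomain

noncomputable abbrev concL : QW →ₗ[ℚ] QW →ₗ[ℚ] QW := bilinMapDomain ℚ (· ++ ·)

noncomputable abbrev dmulL : (ℕ →₀ ℚ) →ₗ[ℚ] (ℕ →₀ ℚ) →ₗ[ℚ] (ℕ →₀ ℚ) := bilinMapDomain ℚ (· + ·)

-- `emb` is `Finsupp.mapDomain (fun a => [a])` by definition, so `emb x = embL x` is `rfl`.
noncomputable abbrev embL : (ℕ →₀ ℚ) →ₗ[ℚ] QW := Finsupp.lmapDomain ℚ ℚ fun a => [a]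

lemma concP_eq_concL (p q : QW) : concP p q = concL p q := (bilinMapDomain_apply _ p q).symm

lemma dmul_eq_dmulL (x y : ℕ →₀ ℚ) : dmul x y = dmulL x y := (bilinMapDomain_apply _ x y).symm

lemma concL_single_nil (p : QW) : concL p (Finsupp.single [] 1) = p := by
  have h : concL.flip (Finsupp.single [] 1) = LinearMap.id := by
    ext u
    simp [bilinMapDomain_single]
  exact LinearMap.congr_fun h p

lemma dmul_assoc (x y w : ℕ →₀ ℚ) : dmul (dmul x y) w = dmul x (dmul y w) := by
  have hmul (x y : ℕ →₀ ℚ) : AddMonoidAlgebra.ofCoeff (dmul x y) =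
      AddMonoidAlgebra.ofCoeff x * AddMonoidAlgebra.ofCoeff y := by
    rw [AddMonoidAlgebra.mul_def, dmul]
    simp_rw [AddMonoidAlgebra.ofCoeff_finsuppSum, AddMonoidAlgebra.ofCoeff_single]
  apply AddMonoidAlgebra.ofCoeff_injective
  rw [hmul, hmul, hmul, hmul, mul_assoc]

lemma dList_cons_cons (x y : ℕ →₀ ℚ) (t : List (ℕ →₀ ℚ)) :
    dList (x :: y :: t) = dList (dmul x y :: t) := by
  cases t with
  | nil => rfl
  | cons u t => exact (dmul_assoc x y (dList (u :: t))).symm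

lemma sum_comps_succ {M : Type*} [AddCommMonoid M] (n : ℕ) (F : List ℕ → M) :
    ((comps (n + 1)).map F).sum =
      ∑ p ∈ antidiagonal n, ((comps p.2).map fun I => F ((p.1 + 1) :: I)).sum := by
  have hcomps : comps (n + 1) = (List.range (n + 1)).flatMap fun k =>
      (comps k).map fun I => (n + 1 - k) :: I := by
    rw [comps, ← List.attach_map_subtype_val (List.range (n + 1)), List.flatMap_map]
    simp
  rw [hcomps, ← Nat.sum_antidiagonal_swap, Nat.sum_antidiagonal_eq_sum_range_succ_mk, Finset.sum,
    Finset.range_val, Multiset.range, Multiset.map_coe, Multiset.sum_coe]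
  simp only [List.flatMap, List.map_flatten, List.sum_flatten, List.map_map, Function.comp_def,
    Prod.swap]
  congr 1
  refine List.map_congr_left fun k hk => ?_
  rw [show n + 1 - k = n - k + 1 by have := List.mem_range.mp hk; omega]

lemma geomC_zero (g : ℕ → QW) : geomC g 0 = Finsupp.single [] 1 := by
  simp [geomC, comps]

lemma geomC_succ (g : ℕ → QW) (n : ℕ) :
    geomC g (n + 1) = ∑ p ∈ antidiagonal n, concL (g (p.1 + 1)) (geomC g p.2) := by
  rw [geomC, sum_comps_succ]
  refine sum_congr rfl fun p _ => ?_
  rw [geomC, map_list_sum, List.map_map]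
  simp only [Function.comp_def, List.map_cons, List.foldr_cons, concP_eq_concL]

section PsiShift
variable (c : ℕ → ℚ)

noncomputable def psiWord (w : List ℕ) : QW :=
  ((comps w.length).map fun I => (I.map c).prod • Finsupp.single (act I w) (1 : ℚ)).sum

noncomputable def PsiL : QW →ₗ[ℚ] QW := Finsupp.linearCombination ℚ (psiWord c)

lemma Psi_eq_PsiL (p : QW) : Psi c p = PsiL c p := by
  rw [PsiL, Finsupp.linearCombination_apply]
  rfl

lemma psiWord_nil : psiWord c [] = Finsupp.single [] 1 := by
  simp [psiWord, comps, act]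

/-- Ψ_f on the word `a :: w` with the coefficient `c i₁` of the first block replaced by
`c (i₁ + k - 1)`; `j` counts the letters of `w` that join `a` in that block. -/
noncomputable def psiShift (k a : ℕ) (w : List ℕ) : QW :=
  ∑ j ∈ range (w.length + 1),
    c (j + k) • concL (Finsupp.single [a + (w.take j).sum] 1) (psiWord c (w.drop j))

lemma psiWord_cons (a : ℕ) (w : List ℕ) : psiWord c (a :: w) = psiShift c 1 a w := by
  rw [psiWord, List.length_cons, sum_comps_succ, Nat.sum_antidiagonal_eq_sum_range_succ_mk]
  refine sum_congr rfl fun j _ => ?_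
  rw [psiWord, List.length_drop, map_list_sum, List.smul_sum, List.map_map, List.map_map]
  refine congrArg List.sum (List.map_congr_left fun I _ => ?_)
  simp only [Function.comp_apply, List.map_cons, List.prod_cons, act, List.take_succ_cons,
    List.drop_succ_cons, List.sum_cons, map_smul, bilinMapDomain_single, mul_smul, one_mul,
    List.singleton_append]

lemma psiShift_nil (k a : ℕ) : psiShift c k a [] = c k • Finsupp.single [a] 1 := by
  simp [psiShift, psiWord_nil, bilinMapDomain_single]

lemma psiShift_cons (k a b : ℕ) (w : List ℕ) :
    psiShift c k a (b :: w) = c k • concL (Finsupp.single [a] 1) (psiWord c (b :: w)) +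
      psiShift c (k + 1) (a + b) w := by
  rw [psiShift, List.length_cons, sum_range_succ', add_comm, psiShift]
  simp [add_assoc, add_comm 1 k]

noncomputable def PsiShift (k : ℕ) : (ℕ →₀ ℚ) →ₗ[ℚ] QW →ₗ[ℚ] QW :=
  Finsupp.linearCombination ℚ fun a => Finsupp.linearCombination ℚ (psiShift c k a)

lemma PsiShift_single (k a : ℕ) (r : ℚ) (w : List ℕ) (s : ℚ) :
    PsiShift c k (Finsupp.single a r) (Finsupp.single w s) = (r * s) • psiShift c k a w := by
  simp [PsiShift, mul_smul, smul_comm r s]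

lemma PsiShift_single_nil (k : ℕ) (y : ℕ →₀ ℚ) :
    PsiShift c k y (Finsupp.single [] 1) = c k • embL y := by
  have h : (PsiShift c k).flip (Finsupp.single [] 1) = c k • embL := by
    ext a
    simp [PsiShift_single, psiShift_nil]
  exact LinearMap.congr_fun h y

lemma PsiL_concL_embL (y : ℕ →₀ ℚ) (p : QW) :
    PsiL c (concL (embL y) p) = PsiShift c 1 y p := by
  have h : (concL ∘ₗ embL).compr₂ (PsiL c) = PsiShift c 1 := by
    ext a w
    simp [PsiShift_single, bilinMapDomain_single, PsiL, psiWord_cons]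
  exact LinearMap.congr_fun₂ h y p

lemma PsiShift_concL_embL (k : ℕ) (y y' : ℕ →₀ ℚ) (p : QW) :
    PsiShift c k y (concL (embL y') p) =
      c k • concL (embL y) (PsiL c (concL (embL y') p)) + PsiShift c (k + 1) (dmulL y y') p := by
  induction y using Finsupp.induction_linear with
  | zero => simp
  | add y₁ y₂ h₁ h₂ =>
    simp only [map_add, LinearMap.add_apply, smul_add, h₁, h₂]
    abel
  | single a r =>
  induction y' using Finsupp.induction_linear with
  | zero => simp
  | add y₁ y₂ h₁ h₂ =>
    simp only [map_add, LinearMap.add_apply, smul_add, h₁, h₂]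
    abel
  | single b s =>
  induction p using Finsupp.induction_linear with
  | zero => simp
  | add p₁ p₂ h₁ h₂ =>
    simp only [map_add, smul_add, h₁, h₂]
    abel
  | single w t =>
    simp only [Finsupp.lmapDomain_apply, Finsupp.mapDomain_single, bilinMapDomain_single,
      List.singleton_append, PsiShift_single, psiShift_cons, PsiL, Finsupp.linearCombination_single]
    rw [← Finsupp.smul_single_one [a] r, map_smul, map_smul, LinearMap.smul_apply]
    module

end PsiShift

section Diamond
variable (c : ℕ → ℚ) (z : ℕ → (ℕ →₀ ℚ))

/-- The λⁱ-coefficient of f_◊(λz). -/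
noncomputable def fDiamondCoeff (i : ℕ) : ℕ →₀ ℚ :=
  ((comps i).map fun I => c I.length • dList (I.map fun j => z (j - 1))).sum

/-- The λᵐ-coefficient of ∑ⱼ c_{j+k} y ◊ (λz)^{◊j}. -/
noncomputable def fDiamondShiftCoeff (k : ℕ) (y : ℕ →₀ ℚ) (m : ℕ) : ℕ →₀ ℚ :=
  ((comps m).map fun K => c (K.length + k) • dList (y :: K.map fun j => z (j - 1))).sum

lemma fDiamondShiftCoeff_zero (k : ℕ) (y : ℕ →₀ ℚ) :
    fDiamondShiftCoeff c z k y 0 = c k • y := by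
  simp [fDiamondShiftCoeff, comps, dList]

lemma fDiamondShiftCoeff_succ (k : ℕ) (y : ℕ →₀ ℚ) (m : ℕ) :
    fDiamondShiftCoeff c z k y (m + 1) =
      ∑ p ∈ antidiagonal m, fDiamondShiftCoeff c z (k + 1) (dmul y (z p.1)) p.2 := by
  rw [fDiamondShiftCoeff, sum_comps_succ]
  refine sum_congr rfl fun p _ => ?_
  simp only [fDiamondShiftCoeff, List.map_cons, List.length_cons, Nat.add_sub_cancel,
    dList_cons_cons, add_assoc, add_comm 1 k]

lemma fDiamondCoeff_succ (m : ℕ) :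
    fDiamondCoeff c z (m + 1) = ∑ p ∈ antidiagonal m, fDiamondShiftCoeff c z 1 (z p.1) p.2 := by
  rw [fDiamondCoeff, sum_comps_succ]
  refine sum_congr rfl fun p _ => ?_
  simp only [fDiamondShiftCoeff, List.map_cons, List.length_cons, Nat.add_sub_cancel]

-- The λⁿ-coefficients of 1/(1−λz) and of 1/(1 − f_◊(λz)).
local notation "𝒢" => geomC (fun i => embL (z (i - 1)))
local notation "ℛ" => geomC (fun i => embL (fDiamondCoeff c z i))

lemma sum_PsiShift_geomC (n k : ℕ) (x : ℕ → ℕ →₀ ℚ)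
    (ih : ∀ b ≤ n, ∀ y, PsiShift c k y (𝒢 b) =
      ∑ q ∈ antidiagonal b, concL (embL (fDiamondShiftCoeff c z k y q.1)) (ℛ q.2)) :
    ∑ p ∈ antidiagonal n, PsiShift c k (x p.1) (𝒢 p.2) =
      ∑ q ∈ antidiagonal n,
        concL (embL (∑ p ∈ antidiagonal q.1, fDiamondShiftCoeff c z k (x p.1) p.2)) (ℛ q.2) := by
  rw [sum_congr rfl fun p hp => ih p.2 (HasAntidiagonal.antidiagonal.snd_le hp) (x p.1),
    sum_antidiagonal_antidiagonal n fun a m r =>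
      concL (embL (fDiamondShiftCoeff c z k (x a) m)) (ℛ r)]
  simp only [map_sum, LinearMap.sum_apply]

lemma PsiL_geomC_succ (n : ℕ)
    (ih : ∀ b ≤ n, ∀ y, PsiShift c 1 y (𝒢 b) =
      ∑ q ∈ antidiagonal b, concL (embL (fDiamondShiftCoeff c z 1 y q.1)) (ℛ q.2)) :
    PsiL c (𝒢 (n + 1)) = ℛ (n + 1) := by
  simp only [geomC_succ, map_sum, Nat.add_sub_cancel, PsiL_concL_embL]
  rw [sum_PsiShift_geomC c z n 1 z ih]
  simp only [fDiamondCoeff_succ]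

lemma PsiShift_geomC (n k : ℕ) (y : ℕ →₀ ℚ) :
    PsiShift c k y (𝒢 n) =
      ∑ q ∈ antidiagonal n, concL (embL (fDiamondShiftCoeff c z k y q.1)) (ℛ q.2) := by
  induction n using Nat.strong_induction_on generalizing k y with
  | _ n ih =>
  cases n with
  | zero =>
    simp [geomC_zero, PsiShift_single_nil, fDiamondShiftCoeff_zero, concL_single_nil,
      Finsupp.mapDomain_smul]
  | succ n =>
    have ih' (k : ℕ) : ∀ b ≤ n, ∀ y, PsiShift c k y (𝒢 b) =
        ∑ q ∈ antidiagonal b, concL (embL (fDiamondShiftCoeff c z k y q.1)) (ℛ q.2) :=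
      fun b hb y => ih b (Nat.lt_succ_of_le hb) k y
    calc PsiShift c k y (𝒢 (n + 1))
        = c k • concL (embL y) (PsiL c (𝒢 (n + 1))) +
            ∑ p ∈ antidiagonal n, PsiShift c (k + 1) (dmul y (z p.1)) (𝒢 p.2) := by
          simp only [geomC_succ, map_sum, Nat.add_sub_cancel, PsiShift_concL_embL,
            sum_add_distrib, smul_sum, dmul_eq_dmulL]
      _ = ∑ q ∈ antidiagonal (n + 1),
            concL (embL (fDiamondShiftCoeff c z k y q.1)) (ℛ q.2) := by
          rw [PsiL_geomC_succ c z n (ih' 1),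
            sum_PsiShift_geomC c z n (k + 1) (fun a => dmul y (z a)) (ih' (k + 1)),
            Nat.sum_antidiagonal_succ, fDiamondShiftCoeff_zero]
          simp only [fDiamondShiftCoeff_succ, map_smul, LinearMap.smul_apply]

end Diamond

theorem Psi_geometric_series (c : ℕ → ℚ) (z : ℕ → (ℕ →₀ ℚ)) :
    ∀ n : ℕ, Psi c (geomC (fun i => emb (z (i - 1))) n) =
      geomC (fun i => emb
        (((comps i).map fun I => c I.length • dList (I.map fun j => z (j - 1))).sum)) n := by
  intro n
  rw [Psi_eq_PsiL]
  cases n with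
  | zero => simp [geomC_zero, PsiL, psiWord_nil]
  | succ n => exact PsiL_geomC_succ c z n fun b _ y => PsiShift_geomC c z b 1 y
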